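/- Let (H, B) be a Rota–Baxter Hopf algebra of weight −1 and define B̃(x) = x₁ B(S(x₂)). Then for all x, y ∈ H the following identity holds: S(B(S(B̃(S(B(S(x₁))))) · y · B̃(S(B(S(x₂)))))) · S(B(B̃(x₃))) = S(B(y B̃(x))). -/

import Mathlib

/-!
Work in the convolution algebra of linear endomorphisms of `H`. Every coalgebra map `f` has
convolution inverse `S ∘ f`, and cocommutativity makes the antipode `S` an involutive coalgebra
map that reverses convolution products. For a coalgebra map `s` the Rota–Baxter identity
reads `(B ∘ s) * (B ∘ w) = B ∘ ((B ∘ s) * w * (S ∘ B ∘ s) * s)`. Taking `s = S`, `w = B̃` gives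
`(B ∘ S) * (B ∘ B̃) = B ∘ B ∘ S`, and hence `B̃ ∘ S ∘ B ∘ S = B ∘ B̃`. Taking `s = B̃` and
`w = (S ∘ B ∘ B̃) * (y · B ∘ B̃)` gives `(B ∘ B̃) * (B ∘ w) = B ∘ (y · B̃)`; applying `S` to
this is the claimed identity.
-/

open TensorProduct LinearMap

noncomputable section

universe u

variable {K H : Type u} [Field K] [CharZero K] [Ring H] [HopfAlgebra K H]

/-- The antipode of `H` as a `K`-linear map. -/
def aS (K H : Type u) [Field K] [Ring H] [HopfAlgebra K H] : H →ₗ[K] H :=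
  HopfAlgebra.antipode K

/-- Convolution-type composite: `conv f g x = f x₁ * g x₂` in Sweedler notation,
where the source may be any coalgebra `C`. -/
def conv {C : Type u} [AddCommGroup C] [Module K C] [Coalgebra K C]
    (f g : C →ₗ[K] H) : C →ₗ[K] H :=
  LinearMap.mul' K H ∘ₗ TensorProduct.map f g ∘ₗ Coalgebra.comul

/-- `wrap f g h (a ⊗ₜ c) = f a₁ * (g c * h a₂)` in Sweedler notation. -/
def wrap {C : Type u} [AddCommGroup C] [Module K C] [Coalgebra K C]
    (f : C →ₗ[K] H) (g : H →ₗ[K] H) (h : C →ₗ[K] H) : C ⊗[K] H →ₗ[K] H :=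
  LinearMap.mul' K H ∘ₗ
    TensorProduct.map f
      (LinearMap.mul' K H ∘ₗ TensorProduct.map g h ∘ₗ (TensorProduct.comm K C H).toLinearMap) ∘ₗ
    (TensorProduct.assoc K C C H).toLinearMap ∘ₗ
    TensorProduct.map Coalgebra.comul LinearMap.id

/-- The descendent product: `mulB B (x ⊗ₜ y) = B x₁ * (y * (S (B x₂) * x₃))`,
i.e. `x *_B y = B(x₁) y S(B(x₂)) x₃` in Sweedler notation. -/
def mulB (B : H →ₗ[K] H) : H ⊗[K] H →ₗ[K] H :=
  wrap B LinearMap.id (conv (aS K H ∘ₗ B) LinearMap.id)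

/-- `Bt B x = x₁ * B (S x₂)`, i.e. the operator `B̃`. -/
def Bt (B : H →ₗ[K] H) : H →ₗ[K] H := conv LinearMap.id (B ∘ₗ aS K H)

/-- `SB B x = S(B x₁) * (S x₂ * B x₃)`, the antipode `S_B` of the descendent Hopf algebra. -/
def SB (B : H →ₗ[K] H) : H →ₗ[K] H := conv (aS K H ∘ₗ B) (conv (aS K H) B)

/-- `H` is cocommutative. -/
def IsCocomm (K H : Type u) [Field K] [Ring H] [HopfAlgebra K H] : Prop :=
  ∀ x : H, (TensorProduct.comm K H H) (Coalgebra.comul x) = Coalgebra.comul x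

/-- `B` is a Rota–Baxter operator of weight `-1` on `H`: it is a coalgebra map and
`B x * B y = B (B(x₁) y S(B(x₂)) x₃)` in Sweedler notation. -/
def IsRotaBaxter (B : H →ₗ[K] H) : Prop :=
  (Coalgebra.comul ∘ₗ B = TensorProduct.map B B ∘ₗ Coalgebra.comul) ∧
  (Coalgebra.counit ∘ₗ B = Coalgebra.counit) ∧
  ∀ x y : H, B x * B y = B (mulB B (x ⊗ₜ[K] y))

section

open Coalgebra HopfAlgebra WithConv

lemma TensorProduct.map_convOne_convOne {R A B C D : Type*} [CommSemiring R]
    [Semiring A] [Algebra R A] [Semiring B] [Algebra R B]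
    [AddCommMonoid C] [Module R C] [Coalgebra R C] [AddCommMonoid D] [Module R D] [Coalgebra R D] :
    map (1 : WithConv (C →ₗ[R] A)).ofConv (1 : WithConv (D →ₗ[R] B)).ofConv =
      (1 : WithConv (C ⊗[R] D →ₗ[R] A ⊗[R] B)).ofConv := by
  ext c d
  simp [Algebra.TensorProduct.one_def, Algebra.algebraMap_eq_smul_one, smul_tmul', smul_smul]

namespace CoalgHom

variable {R A C : Type*} [CommSemiring R] [AddCommMonoid C] [Module R C] [Coalgebra R C]

section Antipode

variable [Semiring A] [HopfAlgebra R A]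

lemma convMul_antipode_comp_eq_one (f : C →ₗc[R] A) :
    toConv (f : C →ₗ[R] A) * toConv (antipode R ∘ₗ f) = 1 := by
  have h := congr(ofConv $(id_mul_antipode (R := R) (C := A)) ∘ₗ f.toLinearMap)
  rw [convMul_comp_coalgHom_distrib] at h
  ext c
  simpa using congr($h c)

lemma antipode_comp_convMul_eq_one (f : C →ₗc[R] A) :
    toConv (antipode R ∘ₗ f) * toConv (f : C →ₗ[R] A) = 1 := by
  have h := congr(ofConv $(antipode_mul_id (R := R) (C := A)) ∘ₗ f.toLinearMap)
  rw [convMul_comp_coalgHom_distrib] at h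
  ext c
  simpa using congr($h c)

end Antipode

variable [Semiring A] [Bialgebra R A] [Coalgebra.IsCocomm R C]

def convMul (f g : C →ₗc[R] A) : C →ₗc[R] A :=
  (Bialgebra.mulCoalgHom R A).comp ((Coalgebra.TensorProduct.map f g).comp (comulCoalgHom R C))

end CoalgHom

lemma LinearMap.mulLeft_comp_convMul {R A C : Type*} [CommSemiring R] [Semiring A] [Algebra R A]
    [AddCommMonoid C] [Module R C] [Coalgebra R C] (y : A) (f g : C →ₗ[R] A) :
    toConv (mulLeft R y ∘ₗ f) * toConv g =
      toConv (mulLeft R y ∘ₗ (toConv f * toConv g).ofConv) := by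
  ext c
  simp [(ℛ R c).convMul_apply, mul_assoc]

namespace HopfAlgebra

variable {R A C : Type*} [CommSemiring R] [Semiring A] [HopfAlgebra R A]

lemma antipode_comp_convMul [AddCommMonoid C] [Module R C] [Coalgebra R C]
    [Coalgebra.IsCocomm R C] (f g : C →ₗ[R] A) :
    antipode R ∘ₗ (toConv f * toConv g).ofConv =
      (toConv (antipode R ∘ₗ g) * toConv (antipode R ∘ₗ f)).ofConv := by
  ext c
  have h := congr($(antipode_comp_mul_comp_comm (R := R) (A := A)) (map g f (comul c)))
  simp only [comp_apply, LinearEquiv.coe_coe, ← map_comm, comm_comul] at h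
  simpa [map_comp] using h

variable [Coalgebra.IsCocomm R A]

lemma map_antipode_comp_comul_convMul_comul :
    toConv (map (antipode R) (antipode R) ∘ₗ comul (R := R) (A := A)) * toConv comul = 1 := by
  -- `(S ⊗ S) * id = (S * id) ⊗ (S * id) = 1` on `A ⊗ A`, precomposed with the coalgebra map `Δ`
  have h := congr(($(map_convMul_map (f := toConv (antipode R (A := A)))
    (h := toConv LinearMap.id) (g := toConv (antipode R (A := A)))
    (k := toConv LinearMap.id))).ofConv ∘ₗ (comulCoalgHom R A).toLinearMap)
  rw [convMul_comp_coalgHom_distrib] at h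
  simp only [antipode_mul_id, map_id, map_convOne_convOne, convOne_comp_coalgHom] at h
  exact WithConv.ext h

lemma comul_comp_antipode :
    comul ∘ₗ antipode R = map (antipode R) (antipode R) ∘ₗ comul (R := R) (A := A) :=
  congr(ofConv $(left_inv_eq_right_inv map_antipode_comp_comul_convMul_comul comul_right_inv)).symm

variable (R A) in
def antipodeCoalgHom : A →ₗc[R] A where
  toLinearMap := antipode R
  counit_comp := counit_comp_antipode
  map_comp_comul := comul_comp_antipode.symm

@[simp] lemma antipodeCoalgHom_toLinearMap :
    (antipodeCoalgHom R A : A →ₗ[R] A) = antipode R := rfl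

lemma antipode_comp_antipode : antipode R ∘ₗ antipode R = (LinearMap.id : A →ₗ[R] A) :=
  congr(ofConv $(left_inv_eq_right_inv id_mul_antipode
    (antipodeCoalgHom R A).convMul_antipode_comp_eq_one)).symm

@[simp] lemma antipode_antipode (a : A) : antipode R (antipode R a) = a :=
  congr($antipode_comp_antipode a)

end HopfAlgebra

section RotaBaxter

variable {R A : Type u} [Field R] [Ring A] [HopfAlgebra R A] {B : A →ₗ[R] A}

lemma conv_eq_convMul {C : Type u} [AddCommGroup C] [Module R C] [Coalgebra R C]
    (f g : C →ₗ[R] A) : conv f g = (toConv f * toConv g).ofConv := rfl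

lemma toConv_Bt (B : A →ₗ[R] A) :
    toConv (Bt B) = toConv LinearMap.id * toConv (B ∘ₗ antipode R) := rfl

lemma wrap_comp_map_comp_comul {C D : Type u} [AddCommGroup C] [Module R C] [Coalgebra R C]
    [AddCommGroup D] [Module R D] [Coalgebra R D] [Coalgebra.IsCocomm R D]
    (p : C →ₗ[R] A) (q : A →ₗ[R] A) (r : C →ₗ[R] A) (s : D →ₗc[R] C) (w : D →ₗ[R] A) :
    wrap p q r ∘ₗ map s w ∘ₗ comul = conv (p ∘ₗ s) (conv (q ∘ₗ w) (r ∘ₗ s)) := by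
  simp only [wrap, conv, coassoc_simps]
  rw [← CoalgHomClass.map_comp_comul s]
  simp only [coassoc_simps]

namespace IsRotaBaxter

def toCoalgHom (hB : IsRotaBaxter B) : A →ₗc[R] A where
  toLinearMap := B
  map_comp_comul := hB.1.symm
  counit_comp := hB.2.1

@[simp] lemma toCoalgHom_toLinearMap (hB : IsRotaBaxter B) :
    (hB.toCoalgHom : A →ₗ[R] A) = B := rfl

lemma mul'_comp_map (hB : IsRotaBaxter B) : mul' R A ∘ₗ map B B = B ∘ₗ mulB B :=
  TensorProduct.ext' hB.2.2

variable [Coalgebra.IsCocomm R A]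

lemma convMul_comp (hB : IsRotaBaxter B) (s : A →ₗc[R] A) (w : A →ₗ[R] A) :
    toConv (B ∘ₗ s) * toConv (B ∘ₗ w) =
      toConv (B ∘ₗ (toConv (B ∘ₗ s) * toConv w * toConv (antipode R ∘ₗ B ∘ₗ s) *
        toConv (s : A →ₗ[R] A)).ofConv) := by
  have hmulB : mulB B ∘ₗ map s w ∘ₗ comul = (toConv (B ∘ₗ s) * toConv w *
      toConv (antipode R ∘ₗ B ∘ₗ s) * toConv (s : A →ₗ[R] A)).ofConv := by
    rw [mulB, wrap_comp_map_comp_comul, conv_eq_convMul, conv_eq_convMul, conv_eq_convMul,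
      ← CoalgHom.toLinearMap_eq_coe, convMul_comp_coalgHom_distrib]
    simp only [mul_assoc, id_comp, comp_assoc, aS, CoalgHom.toLinearMap_eq_coe, toConv_ofConv]
  rw [← hmulB, LinearMap.convMul_def]
  simp only [map_comp, ← comp_assoc, mul'_comp_map hB]

def btCoalgHom (hB : IsRotaBaxter B) : A →ₗc[R] A :=
  .convMul (.id R A) (hB.toCoalgHom.comp (antipodeCoalgHom R A))

@[simp] lemma btCoalgHom_toLinearMap (hB : IsRotaBaxter B) :
    (hB.btCoalgHom : A →ₗ[R] A) = Bt B :=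
  rfl

lemma comp_antipode_convMul_comp_Bt (hB : IsRotaBaxter B) :
    toConv (B ∘ₗ antipode R) * toConv (B ∘ₗ Bt B) = toConv (B ∘ₗ B ∘ₗ antipode R) := by
  have hBS : toConv (B ∘ₗ antipode R) * toConv (antipode R ∘ₗ B ∘ₗ antipode R) = 1 := by
    simpa [comp_assoc] using
      (hB.toCoalgHom.comp (antipodeCoalgHom R A)).convMul_antipode_comp_eq_one
  have hinner : toConv (B ∘ₗ antipode R) * (toConv LinearMap.id * toConv (B ∘ₗ antipode R)) *
      toConv (antipode R ∘ₗ B ∘ₗ antipode R) * toConv (antipode R) = toConv (B ∘ₗ antipode R) :=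
    calc
      _ = toConv (B ∘ₗ antipode R) * toConv LinearMap.id *
          (toConv (B ∘ₗ antipode R) * toConv (antipode R ∘ₗ B ∘ₗ antipode R)) *
          toConv (antipode R) := by simp only [mul_assoc]
      _ = toConv (B ∘ₗ antipode R) * (toConv LinearMap.id * toConv (antipode R)) := by
        rw [hBS, mul_one, mul_assoc]
      _ = _ := by rw [id_mul_antipode, mul_one]
  have h := hB.convMul_comp (antipodeCoalgHom R A) (Bt B)
  simp only [antipodeCoalgHom_toLinearMap] at h
  rw [h, toConv_Bt, hinner]

lemma Bt_comp_antipode_comp_comp_antipode (hB : IsRotaBaxter B) :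
    Bt B ∘ₗ antipode R ∘ₗ B ∘ₗ antipode R = B ∘ₗ Bt B := by
  have hSBS : toConv (antipode R ∘ₗ B ∘ₗ antipode R) * toConv (B ∘ₗ antipode R) = 1 := by
    simpa [comp_assoc] using
      (hB.toCoalgHom.comp (antipodeCoalgHom R A)).antipode_comp_convMul_eq_one
  have h := congr(ofConv $(toConv_Bt B) ∘ₗ
    ((antipodeCoalgHom R A).comp (hB.toCoalgHom.comp (antipodeCoalgHom R A))).toLinearMap)
  rw [convMul_comp_coalgHom_distrib] at h
  simp only [CoalgHom.comp_toLinearMap, CoalgHom.toLinearMap_eq_coe, antipodeCoalgHom_toLinearMap,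
    toCoalgHom_toLinearMap, id_comp] at h
  have hSS : (B ∘ₗ antipode R) ∘ₗ antipode R ∘ₗ B ∘ₗ antipode R = B ∘ₗ B ∘ₗ antipode R := by
    ext; simp
  rw [h, hSS, ← comp_antipode_convMul_comp_Bt hB, ← mul_assoc, hSBS, one_mul, ofConv_toConv]

lemma antipode_comp_comp_mulLeft_comp_Bt (hB : IsRotaBaxter B) (y : A) :
    antipode R ∘ₗ B ∘ₗ mulLeft R y ∘ₗ Bt B =
      (toConv (antipode R ∘ₗ B ∘ₗ (toConv (antipode R ∘ₗ B ∘ₗ Bt B) *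
        toConv (mulLeft R y ∘ₗ B ∘ₗ Bt B)).ofConv) * toConv (antipode R ∘ₗ B ∘ₗ Bt B)).ofConv := by
  have hg : toConv (B ∘ₗ Bt B) * toConv (antipode R ∘ₗ B ∘ₗ Bt B) = 1 := by
    simpa [comp_assoc] using (hB.toCoalgHom.comp hB.btCoalgHom).convMul_antipode_comp_eq_one
  set W := (toConv (antipode R ∘ₗ B ∘ₗ Bt B) * toConv (mulLeft R y ∘ₗ B ∘ₗ Bt B)).ofConv with hW
  have hinner : toConv (B ∘ₗ Bt B) * toConv W * toConv (antipode R ∘ₗ B ∘ₗ Bt B) * toConv (Bt B) =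
      toConv (mulLeft R y ∘ₗ Bt B) :=
    calc
      _ = toConv (mulLeft R y ∘ₗ B ∘ₗ Bt B) * toConv (antipode R ∘ₗ B ∘ₗ Bt B) * toConv (Bt B) := by
        rw [hW, toConv_ofConv, ← mul_assoc (toConv (B ∘ₗ Bt B)), hg, one_mul]
      _ = toConv (mulLeft R y ∘ₗ (toConv (B ∘ₗ Bt B) * toConv (antipode R ∘ₗ B ∘ₗ Bt B)).ofConv) *
          toConv (Bt B) := by
        rw [mulLeft_comp_convMul]
      _ = _ := by
        rw [hg, mulLeft_comp_convMul, one_mul, ofConv_toConv]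
  have hM : toConv (B ∘ₗ Bt B) * toConv (B ∘ₗ W) = toConv (B ∘ₗ mulLeft R y ∘ₗ Bt B) := by
    simpa [hinner] using hB.convMul_comp hB.btCoalgHom W
  simpa [antipode_comp_convMul] using congr(antipode R ∘ₗ ofConv $hM).symm

end IsRotaBaxter

end RotaBaxter

end

/-- `S(B(S(B̃(S(B(S(x₁))))) y B̃(S(B(S(x₂)))))) · S(B(B̃(x₃))) = S(B(y B̃(x)))`. -/
theorem stmt15 (B : H →ₗ[K] H) (hcc : IsCocomm K H) (hB : IsRotaBaxter B) :
    ∀ x y : H,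
      conv (aS K H ∘ₗ B ∘ₗ
          conv (aS K H ∘ₗ Bt B ∘ₗ aS K H ∘ₗ B ∘ₗ aS K H)
            (LinearMap.mulLeft K y ∘ₗ Bt B ∘ₗ aS K H ∘ₗ B ∘ₗ aS K H))
        (aS K H ∘ₗ B ∘ₗ Bt B) x = aS K H (B (y * Bt B x)) := by
  intro x y
  have : Coalgebra.IsCocomm K H := ⟨LinearMap.ext hcc⟩
  unfold aS
  rw [hB.Bt_comp_antipode_comp_comp_antipode]
  exact congr($(hB.antipode_comp_comp_mulLeft_comp_Bt y) x).symm

end
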